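/- For the l⁶-norm anisotropy γ(n) = (n₁⁶+n₂⁶)^{1/6} on S¹, for all n, n̂ ∈ S¹ the inequality 1 - n₁²n₂² - 2n₁n₂n̂₁n̂₂ - ((n₁⁶+n₂⁶)²(n̂₁⁶+n̂₂⁶))^{1/3} ≥ (n₁n₂ - n̂₁n̂₂)² holds. Consequently, with k₀(n) = 2γ(n)⁻⁵(n₁⁴+n₁²n₂²+n₂⁴), the stability inequality γ(n)[(n̂^⊥)ᵀ Z_{k₀}(n) n̂^⊥] ≥ γ(n̂)² holds. -/

import Mathlib

open Matrix

/-- Clockwise rotation by π/2. -/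
noncomputable def perp (v : Fin 2 → ℝ) : Fin 2 → ℝ := ![v 1, -v 0]

/-- The l⁶-norm anisotropy on the unit circle. -/
noncomputable def gam6 (n : Fin 2 → ℝ) : ℝ := (n 0 ^ 6 + n 1 ^ 6) ^ ((1 : ℝ) / 6)

/-- The Cahn-Hoffman vector for the l⁶-norm anisotropy. -/
noncomputable def xi6 (n : Fin 2 → ℝ) : Fin 2 → ℝ := (gam6 n ^ 5)⁻¹ • ![n 0 ^ 5, n 1 ^ 5]

/-- The surface energy matrix for the l⁶-norm anisotropy with
k₀(n) = 2 γ(n)⁻⁵ (n₁⁴ + n₁² n₂² + n₂⁴). -/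
noncomputable def Z6 (n : Fin 2 → ℝ) : Matrix (Fin 2) (Fin 2) ℝ :=
  gam6 n • (1 : Matrix (Fin 2) (Fin 2) ℝ) - vecMulVec n (xi6 n) - vecMulVec (xi6 n) n
    + (2 * (gam6 n ^ 5)⁻¹ * (n 0 ^ 4 + n 0 ^ 2 * n 1 ^ 2 + n 1 ^ 4)) • vecMulVec n n

/-! On the unit circle, with `p = n₁n₂` and `q = n̂₁n̂₂`, one has `n₁⁶ + n₂⁶ = 1 - 3p²`, so AM-GM
gives `((n₁⁶+n₂⁶)²(n̂₁⁶+n̂₂⁶))^{1/3} ≤ 1 - 2p² - q²`, which is the key inequality after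
completing the square. For stability, `γ(n)⁶ = n₁⁶ + n₂⁶` turns `γ(n)·(n̂^⊥)ᵀZ n̂^⊥` into
`γ(n)⁻⁴(1 - p² - 2pq)`, while `γ(n)⁴γ(n̂)²` is exactly the cube root above; so stability is
the key inequality with the square `(p - q)²` dropped. -/

open Real

lemma rpow_sq_mul_one_third_le {x y : ℝ} (hx : 0 ≤ x) (hy : 0 ≤ y) :
    (x ^ 2 * y) ^ ((1 : ℝ) / 3) ≤ (2 * x + y) / 3 := by
  have amgm := geom_mean_le_arith_mean2_weighted (w₁ := 2 / 3) (w₂ := 1 / 3)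
    (by norm_num) (by norm_num) hx hy (by norm_num)
  rw [mul_rpow (by positivity) hy, ← rpow_natCast, ← rpow_mul hx]
  norm_num at amgm ⊢
  linarith

lemma pow_six_add_pow_six_of_sq_add_sq_eq_one {a b : ℝ} (h : a ^ 2 + b ^ 2 = 1) :
    a ^ 6 + b ^ 6 = 1 - 3 * (a * b) ^ 2 := by
  linear_combination (a ^ 4 - a ^ 2 * b ^ 2 + b ^ 4 + a ^ 2 + b ^ 2 + 1) * h

lemma l6_key_inequality {a b c d : ℝ} (hab : a ^ 2 + b ^ 2 = 1) (hcd : c ^ 2 + d ^ 2 = 1) :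
    (a * b - c * d) ^ 2 ≤
      1 - a ^ 2 * b ^ 2 - 2 * a * b * c * d -
        ((a ^ 6 + b ^ 6) ^ 2 * (c ^ 6 + d ^ 6)) ^ ((1 : ℝ) / 3) := by
  have hx := pow_six_add_pow_six_of_sq_add_sq_eq_one hab
  have hy := pow_six_add_pow_six_of_sq_add_sq_eq_one hcd
  have amgm := rpow_sq_mul_one_third_le (x := a ^ 6 + b ^ 6) (y := c ^ 6 + d ^ 6)
    (by positivity) (by positivity)
  rw [hx, hy] at amgm ⊢
  nlinarith

lemma gam6_nonneg (n : Fin 2 → ℝ) : 0 ≤ gam6 n := by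
  unfold gam6; positivity

lemma gam6_pow_six (n : Fin 2 → ℝ) : gam6 n ^ 6 = n 0 ^ 6 + n 1 ^ 6 := by
  rw [gam6, one_div]
  exact rpow_inv_natCast_pow (by positivity) (by norm_num)

lemma gam6_pow_four_mul_gam6_sq (n m : Fin 2 → ℝ) :
    gam6 n ^ 4 * gam6 m ^ 2 = ((n 0 ^ 6 + n 1 ^ 6) ^ 2 * (m 0 ^ 6 + m 1 ^ 6)) ^ ((1 : ℝ) / 3) := by
  rw [← gam6_pow_six, ← gam6_pow_six, one_div,
    show (gam6 n ^ 6) ^ 2 * gam6 m ^ 6 = (gam6 n ^ 4 * gam6 m ^ 2) ^ 3 by ring]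
  have := gam6_nonneg n
  have := gam6_nonneg m
  exact (pow_rpow_inv_natCast (by positivity) (by norm_num)).symm

lemma gam6_pos_of_sq_add_sq_eq_one {n : Fin 2 → ℝ} (hn : n 0 ^ 2 + n 1 ^ 2 = 1) : 0 < gam6 n := by
  have h := pow_six_add_pow_six_of_sq_add_sq_eq_one hn
  have hquarter : (n 0 * n 1) ^ 2 ≤ 1 / 4 := by nlinarith [sq_nonneg (n 0 ^ 2 - n 1 ^ 2)]
  exact rpow_pos_of_pos (by linarith) _

lemma perp_dotProduct_Z6_mulVec_perp (n m : Fin 2 → ℝ) :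
    perp m ⬝ᵥ Z6 n *ᵥ perp m =
      gam6 n * (m 0 ^ 2 + m 1 ^ 2) + 2 * (gam6 n ^ 5)⁻¹ * ((n 0 * m 1 - n 1 * m 0) *
        ((n 0 ^ 4 + n 0 ^ 2 * n 1 ^ 2 + n 1 ^ 4) * (n 0 * m 1 - n 1 * m 0)
          - (n 0 ^ 5 * m 1 - n 1 ^ 5 * m 0))) := by
  simp only [Z6, perp, xi6, mulVec, dotProduct, Fin.sum_univ_two, Matrix.sub_apply,
    Matrix.add_apply, Matrix.smul_apply, one_apply, vecMulVec_apply, Pi.smul_apply, smul_eq_mul,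
    cons_val_zero, cons_val_one]
  norm_num
  ring

-- With `s = ad - bc`, on the unit circles the inner factor equals `ab(bd - ac)`, and
-- `s(bd - ac) = ab - cd`.
lemma l6_form_numerator_eq {a b c d : ℝ} (hab : a ^ 2 + b ^ 2 = 1) (hcd : c ^ 2 + d ^ 2 = 1) :
    a ^ 6 + b ^ 6 + 2 * ((a * d - b * c) *
        ((a ^ 4 + a ^ 2 * b ^ 2 + b ^ 4) * (a * d - b * c) - (a ^ 5 * d - b ^ 5 * c))) =
      1 - a ^ 2 * b ^ 2 - 2 * a * b * c * d := by
  linear_combination (a ^ 4 - a ^ 2 * b ^ 2 + b ^ 4 + a ^ 2 + b ^ 2 + 1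
    + 2 * a * b * (a * d - b * c) * (b * d - a * c) - 2 * a * b * c * d) * hab
    + 2 * a ^ 2 * b ^ 2 * hcd

lemma gam6_mul_perp_dotProduct_Z6_mulVec_perp {n m : Fin 2 → ℝ}
    (hn : n 0 ^ 2 + n 1 ^ 2 = 1) (hm : m 0 ^ 2 + m 1 ^ 2 = 1) :
    gam6 n * (perp m ⬝ᵥ Z6 n *ᵥ perp m) =
      (1 - n 0 ^ 2 * n 1 ^ 2 - 2 * n 0 * n 1 * m 0 * m 1) / gam6 n ^ 4 := by
  have hX := (gam6_pos_of_sq_add_sq_eq_one hn).ne'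
  rw [perp_dotProduct_Z6_mulVec_perp, hm, ← l6_form_numerator_eq hn hm, ← gam6_pow_six]
  field_simp

/-- Key inequality and stability inequality for the l⁶-norm anisotropy. -/
theorem l6_stability (n m : Fin 2 → ℝ) (hn : n ⬝ᵥ n = 1) (hm : m ⬝ᵥ m = 1) :
    (n 0 * n 1 - m 0 * m 1) ^ 2 ≤
      1 - n 0 ^ 2 * n 1 ^ 2 - 2 * n 0 * n 1 * m 0 * m 1 -
        ((n 0 ^ 6 + n 1 ^ 6) ^ 2 * (m 0 ^ 6 + m 1 ^ 6)) ^ ((1 : ℝ) / 3) ∧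
    gam6 m ^ 2 ≤ gam6 n * (perp m ⬝ᵥ (Z6 n).mulVec (perp m)) := by
  have hn' : n 0 ^ 2 + n 1 ^ 2 = 1 := by simpa [dotProduct, sq] using hn
  have hm' : m 0 ^ 2 + m 1 ^ 2 = 1 := by simpa [dotProduct, sq] using hm
  have key := l6_key_inequality hn' hm'
  refine ⟨key, ?_⟩
  rw [gam6_mul_perp_dotProduct_Z6_mulVec_perp hn' hm',
    le_div_iff₀ (pow_pos (gam6_pos_of_sq_add_sq_eq_one hn') 4), mul_comm,
    gam6_pow_four_mul_gam6_sq]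
  linarith [sq_nonneg (n 0 * n 1 - m 0 * m 1)]
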